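/- For the ≤ relation with a compile-time constant split value: let X, Y be k-bit floating point vectors and suppose the sign bit of Y is 1 (negative split value, as resolved at code-generation time). Then FP(X) ≤ FP(Y) if and only if SI(Y ⊕ M) ≤ SI(X ⊕ M), where M is the mask with only the MSB set. If the sign bit of Y is 0, then FP(X) ≤ FP(Y) if and only if SI(X) ≤ SI(Y). -/

import Mathlib

/-- Unsigned integer interpretation of a bit vector. -/
def UI {k : ℕ} (B : Fin k → Bool) : ℕ :=
  ∑ i : Fin k, if B i then 2 ^ (i : ℕ) else 0

/-- Two's complement (signed integer) interpretation of a (k+1)-bit vector. -/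
def SI {k : ℕ} (B : Fin (k + 1) → Bool) : ℤ :=
  if B (Fin.last k) then
    -2 ^ k + ∑ i : Fin k, (if B i.castSucc then (2 : ℤ) ^ (i : ℕ) else 0)
  else (UI B : ℤ)

/-- Sign bit of a floating point bit vector of length x + j + 1. -/
def signBit (j x : ℕ) (B : Fin (x + j + 1) → Bool) : Bool := B (Fin.last (x + j))

/-- Unsigned value of the exponent field. -/
def expo (j x : ℕ) (B : Fin (x + j + 1) → Bool) : ℕ :=
  ∑ i : Fin j, if B ⟨x + (i : ℕ), by have := i.isLt; omega⟩ then 2 ^ (i : ℕ) else 0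

/-- Unsigned value of the mantissa field. -/
def mant (j x : ℕ) (B : Fin (x + j + 1) → Bool) : ℕ :=
  ∑ i : Fin x, if B ⟨(i : ℕ), by have := i.isLt; omega⟩ then 2 ^ (i : ℕ) else 0

/-- The exponent bias 2^(j-1) - 1. -/
def bias (j : ℕ) : ℤ := 2 ^ (j - 1) - 1

/-- Floating point magnitude (normalized if exponent field nonzero, else denormalized). -/
def mag (j x : ℕ) (B : Fin (x + j + 1) → Bool) : ℚ :=
  if expo j x B = 0 then
    (2 : ℚ) ^ ((1 : ℤ) - bias j) * (mant j x B) * (2 : ℚ) ^ (-(x : ℤ))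
  else
    (2 : ℚ) ^ ((expo j x B : ℤ) - bias j) * (1 + (mant j x B) * (2 : ℚ) ^ (-(x : ℤ)))

/-- Floating point interpretation, as a signed-magnitude value: the sign is paired
(lexicographically) with the (sign-adjusted) magnitude, so that -0 < +0. -/
def FP (j x : ℕ) (B : Fin (x + j + 1) → Bool) : ℤ ×ₗ ℚ :=
  toLex (if signBit j x B then ((0 : ℤ), -(mag j x B)) else ((1 : ℤ), mag j x B))

/-- The floating point value +0. -/
def fpZero : ℤ ×ₗ ℚ := toLex ((1 : ℤ), (0 : ℚ))

/-- Mask with only the most significant bit set. -/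
def mask (k : ℕ) : Fin (k + 1) → Bool := fun i => decide (i = Fin.last k)

/-- Bitwise XOR of two bit vectors. -/
def xorVec {k : ℕ} (X Y : Fin k → Bool) : Fin k → Bool := fun i => xor (X i) (Y i)

/-- Negation of a floating point value: swap the sign, keep the magnitude. -/
def fpNeg (p : ℤ ×ₗ ℚ) : ℤ ×ₗ ℚ := toLex (1 - (ofLex p).1, -(ofLex p).2)

/-! ### Auxiliary lemmas -/

lemma sum_if_pow_lt {k : ℕ} (g : Fin k → Bool) :
    (∑ i : Fin k, if g i then 2 ^ (i : ℕ) else 0) < 2 ^ k := by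
  induction k with
  | zero => simp
  | succ k ih =>
    rw [Fin.sum_univ_castSucc]
    have h := ih (fun i => g i.castSucc)
    have h2 : (2:ℕ) ^ (k+1) = 2 ^ k + 2 ^ k := by ring
    simp only [Fin.coe_castSucc, Fin.val_last] at *
    split <;> omega

/-- Value of the low `k` bits. -/
def low {k : ℕ} (B : Fin (k + 1) → Bool) : ℕ :=
  ∑ i : Fin k, if B i.castSucc then 2 ^ (i : ℕ) else 0

lemma low_lt {k : ℕ} (B : Fin (k + 1) → Bool) : low B < 2 ^ k :=
  sum_if_pow_lt _

lemma SI_eq {k : ℕ} (B : Fin (k + 1) → Bool) :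
    SI B = if B (Fin.last k) then -2 ^ k + (low B : ℤ) else (low B : ℤ) := by
  have hcast : ((low B : ℕ) : ℤ) = ∑ i : Fin k, (if B i.castSucc then (2:ℤ) ^ (i : ℕ) else 0) := by
    simp [low, apply_ite (Nat.cast : ℕ → ℤ)]
  unfold SI UI
  rw [Fin.sum_univ_castSucc]
  split <;> rename_i h <;> simp [h, hcast, low, apply_ite (Nat.cast : ℕ → ℤ)]

lemma low_eq (j x : ℕ) (B : Fin (x + j + 1) → Bool) :
    low B = mant j x B + 2 ^ x * expo j x B := by
  unfold low
  rw [Fin.sum_univ_add (fun i : Fin (x + j) => if B i.castSucc then 2 ^ (i : ℕ) else 0)]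
  have h1 : (∑ i : Fin x, if B (Fin.castAdd j i).castSucc then 2 ^ ((Fin.castAdd j i : ℕ)) else 0)
      = mant j x B := by
    unfold mant
    apply Finset.sum_congr rfl
    intro i _
    have : (Fin.castAdd j i).castSucc = (⟨(i : ℕ), by have := i.isLt; omega⟩ : Fin (x + j + 1)) := by
      ext; simp
    rw [this]
    simp
  have h2 : (∑ i : Fin j, if B (Fin.natAdd x i).castSucc then 2 ^ ((Fin.natAdd x i : ℕ)) else 0)
      = 2 ^ x * expo j x B := by
    unfold expo
    rw [Finset.mul_sum]
    apply Finset.sum_congr rfl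
    intro i _
    have : (Fin.natAdd x i).castSucc = (⟨x + (i : ℕ), by have := i.isLt; omega⟩ : Fin (x + j + 1)) := by
      ext; simp
    rw [this]
    split <;> simp [pow_add]
  rw [h1, h2]

lemma mant_lt (j x : ℕ) (B : Fin (x + j + 1) → Bool) : mant j x B < 2 ^ x :=
  sum_if_pow_lt _

lemma expo_lt (j x : ℕ) (B : Fin (x + j + 1) → Bool) : expo j x B < 2 ^ j :=
  sum_if_pow_lt _

/-- Key strict monotonicity fact for the magnitude formula. -/
lemma mag_key (x : ℕ) (b : ℤ) (e m e' m' : ℕ) (hm : m < 2 ^ x) (hm' : m' < 2 ^ x)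
    (h : m + 2 ^ x * e < m' + 2 ^ x * e') :
    (if e = 0 then (2:ℚ) ^ ((1:ℤ) - b) * m * 2 ^ (-(x:ℤ))
      else (2:ℚ) ^ ((e:ℤ) - b) * (1 + m * 2 ^ (-(x:ℤ))))
    < (if e' = 0 then (2:ℚ) ^ ((1:ℤ) - b) * m' * 2 ^ (-(x:ℤ))
      else (2:ℚ) ^ ((e':ℤ) - b) * (1 + m' * 2 ^ (-(x:ℤ)))) := by
  have hpx : (0:ℚ) < 2 ^ (x:ℤ) := zpow_pos (by norm_num) _
  have hpn : (0:ℚ) < 2 ^ (-(x:ℤ)) := zpow_pos (by norm_num) _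
  have hinv : (2:ℚ) ^ (-(x:ℤ)) = ((2:ℚ) ^ (x:ℕ))⁻¹ := by
    rw [zpow_neg, zpow_natCast]
  have hmp : (m : ℚ) * 2 ^ (-(x:ℤ)) < 1 := by
    rw [hinv, ← div_eq_mul_inv, div_lt_one (by positivity)]
    exact_mod_cast hm
  have hmp' : (0:ℚ) ≤ (m' : ℚ) * 2 ^ (-(x:ℤ)) := by positivity
  -- Linearize the hypothesis: e < e' ∨ (e = e' ∧ m < m')
  have hcases : e < e' ∨ (e = e' ∧ m < m') := by
    rcases lt_trichotomy e e' with h1 | h1 | h1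
    · exact Or.inl h1
    · subst h1; exact Or.inr ⟨rfl, by omega⟩
    · exfalso
      have : 2 ^ x * (e' + 1) ≤ 2 ^ x * e := Nat.mul_le_mul_left _ h1
      rw [Nat.mul_succ] at this
      omega
  rcases hcases with he | ⟨rfl, hmm⟩
  · -- e < e', so e' ≠ 0
    have he0 : e' ≠ 0 := by omega
    rw [if_neg he0]
    have step1 : (if e = 0 then (2:ℚ) ^ ((1:ℤ) - b) * m * 2 ^ (-(x:ℤ))
        else (2:ℚ) ^ ((e:ℤ) - b) * (1 + m * 2 ^ (-(x:ℤ)))) < 2 ^ ((e:ℤ) + 1 - b) := by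
      split <;> rename_i h0
      · subst h0
        have : (2:ℚ) ^ ((1:ℤ) - b) * ((m:ℚ) * 2 ^ (-(x:ℤ))) < 2 ^ ((1:ℤ) - b) :=
          mul_lt_of_lt_one_right (zpow_pos (by norm_num) _) hmp
        push_cast
        calc (2:ℚ) ^ ((1:ℤ) - b) * m * 2 ^ (-(x:ℤ))
            = 2 ^ ((1:ℤ) - b) * ((m:ℚ) * 2 ^ (-(x:ℤ))) := by ring
          _ < 2 ^ ((1:ℤ) - b) := this
          _ = 2 ^ ((0:ℤ) + 1 - b) := by norm_num
      · have h2 : 1 + (m:ℚ) * 2 ^ (-(x:ℤ)) < 2 := by linarith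
        calc (2:ℚ) ^ ((e:ℤ) - b) * (1 + m * 2 ^ (-(x:ℤ)))
            < 2 ^ ((e:ℤ) - b) * 2 := by
              exact mul_lt_mul_of_pos_left h2 (zpow_pos (by norm_num) _)
          _ = 2 ^ ((e:ℤ) - b + 1) := by
              rw [zpow_add_one₀ (by norm_num : (2:ℚ) ≠ 0)]
          _ = 2 ^ ((e:ℤ) + 1 - b) := by ring_nf
    have step2 : (2:ℚ) ^ ((e:ℤ) + 1 - b) ≤ 2 ^ ((e':ℤ) - b) := by
      apply zpow_le_zpow_right₀ (by norm_num)
      have : (e:ℤ) + 1 ≤ (e':ℤ) := by exact_mod_cast he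
      omega
    have step3 : (2:ℚ) ^ ((e':ℤ) - b) ≤ 2 ^ ((e':ℤ) - b) * (1 + m' * 2 ^ (-(x:ℤ))) :=
      le_mul_of_one_le_right (le_of_lt (zpow_pos (by norm_num) _)) (by linarith)
    calc _ < (2:ℚ) ^ ((e:ℤ) + 1 - b) := step1
      _ ≤ 2 ^ ((e':ℤ) - b) := step2
      _ ≤ _ := step3
  · -- same exponent, m < m'
    have hmmQ : (m:ℚ) < (m':ℚ) := by exact_mod_cast hmm
    split <;> rename_i h0
    · calc (2:ℚ) ^ ((1:ℤ) - b) * m * 2 ^ (-(x:ℤ))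
          < 2 ^ ((1:ℤ) - b) * m' * 2 ^ (-(x:ℤ)) := by
            apply mul_lt_mul_of_pos_right _ hpn
            exact mul_lt_mul_of_pos_left hmmQ (zpow_pos (by norm_num) _)
        _ = _ := rfl
    · apply mul_lt_mul_of_pos_left _ (zpow_pos (by norm_num : (0:ℚ) < 2) _)
      have := mul_lt_mul_of_pos_right hmmQ hpn
      linarith

lemma em_eq_of_low_eq (x e m e' m' : ℕ) (hm : m < 2 ^ x) (hm' : m' < 2 ^ x)
    (h : m + 2 ^ x * e = m' + 2 ^ x * e') : e = e' ∧ m = m' := by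
  have he : e = e' := by
    rcases lt_trichotomy e e' with h1 | h1 | h1
    · exfalso
      have : 2 ^ x * (e + 1) ≤ 2 ^ x * e' := Nat.mul_le_mul_left _ h1
      rw [Nat.mul_succ] at this
      omega
    · exact h1
    · exfalso
      have : 2 ^ x * (e' + 1) ≤ 2 ^ x * e := Nat.mul_le_mul_left _ h1
      rw [Nat.mul_succ] at this
      omega
  subst he
  exact ⟨rfl, by omega⟩

lemma mag_lt_of_low_lt {j x : ℕ} {X Y : Fin (x + j + 1) → Bool}
    (h : low X < low Y) : mag j x X < mag j x Y := by
  rw [low_eq, low_eq] at h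
  unfold mag
  exact mag_key x (bias j) _ _ _ _ (mant_lt j x X) (mant_lt j x Y) h

lemma mag_eq_of_low_eq {j x : ℕ} {X Y : Fin (x + j + 1) → Bool}
    (h : low X = low Y) : mag j x X = mag j x Y := by
  rw [low_eq, low_eq] at h
  obtain ⟨he, hm⟩ := em_eq_of_low_eq x _ _ _ _ (mant_lt j x X) (mant_lt j x Y) h
  unfold mag
  rw [he, hm]

lemma mag_le_iff {j x : ℕ} (X Y : Fin (x + j + 1) → Bool) :
    mag j x X ≤ mag j x Y ↔ low X ≤ low Y := by
  constructor
  · intro h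
    by_contra hc
    push_neg at hc
    exact absurd h (not_le.mpr (mag_lt_of_low_lt hc))
  · intro h
    rcases lt_or_eq_of_le h with h | h
    · exact le_of_lt (mag_lt_of_low_lt h)
    · exact le_of_eq (mag_eq_of_low_eq h)

lemma low_xor_mask {k : ℕ} (B : Fin (k + 1) → Bool) :
    low (xorVec B (mask k)) = low B := by
  unfold low xorVec mask
  apply Finset.sum_congr rfl
  intro i _
  have : (i.castSucc : Fin (k+1)) ≠ Fin.last k := Fin.ne_of_lt (Fin.castSucc_lt_last i)
  simp [this]

lemma SI_xor_mask {k : ℕ} (B : Fin (k + 1) → Bool) :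
    SI (xorVec B (mask k)) =
      if B (Fin.last k) then (low B : ℤ) else -2 ^ k + (low B : ℤ) := by
  rw [SI_eq, low_xor_mask]
  have hsign : xorVec B (mask k) (Fin.last k) = !B (Fin.last k) := by
    simp [xorVec, mask]
  rw [hsign]
  cases h : B (Fin.last k) <;> simp

/-- correctness of the compile-time split-value transformation
for the ≤ comparison. -/
theorem flint_le_split_value (j x : ℕ) (hj : 1 ≤ j) (X Y : Fin (x + j + 1) → Bool) :
    (signBit j x Y = true →
      (FP j x X ≤ FP j x Y ↔
        SI (xorVec Y (mask (x + j))) ≤ SI (xorVec X (mask (x + j))))) ∧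
    (signBit j x Y = false → (FP j x X ≤ FP j x Y ↔ SI X ≤ SI Y)) := by
  have hlowX := low_lt X
  have hlowY := low_lt Y
  have hXZ : (low X : ℤ) < 2 ^ (x + j) := by exact_mod_cast hlowX
  have hYZ : (0:ℤ) ≤ (low Y : ℤ) := Int.natCast_nonneg _
  constructor
  · intro hY
    unfold signBit at hY
    rw [SI_xor_mask, SI_xor_mask, hY]
    unfold FP signBit
    rw [hY]
    simp only [eq_self_iff_true, Bool.false_eq_true, if_true, if_false]
    cases hX : X (Fin.last (x + j)) with
    | true =>
      simp only [eq_self_iff_true, Bool.false_eq_true, if_true, if_false]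
      rw [Prod.Lex.le_iff]
      simp only [ofLex_toLex, lt_self_iff_false, false_or, true_and, neg_le_neg_iff]
      rw [mag_le_iff]
      exact ⟨fun h => by exact_mod_cast h, fun h => by exact_mod_cast h⟩
    | false =>
      simp only [eq_self_iff_true, Bool.false_eq_true, if_true, if_false]
      rw [Prod.Lex.le_iff]
      constructor
      · rintro (h | ⟨h, -⟩) <;> norm_num at h
      · intro h
        exfalso
        omega
  · intro hY
    unfold signBit at hY
    rw [SI_eq X, SI_eq Y, hY]
    unfold FP signBit
    rw [hY]
    simp only [eq_self_iff_true, Bool.false_eq_true, if_true, if_false]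
    cases hX : X (Fin.last (x + j)) with
    | true =>
      simp only [eq_self_iff_true, Bool.false_eq_true, if_true, if_false]
      rw [Prod.Lex.le_iff]
      constructor
      · intro _
        omega
      · intro _
        exact Or.inl (by norm_num)
    | false =>
      simp only [eq_self_iff_true, Bool.false_eq_true, if_true, if_false]
      rw [Prod.Lex.le_iff]
      simp only [ofLex_toLex, lt_self_iff_false, false_or, true_and]
      rw [mag_le_iff]
      exact ⟨fun h => by exact_mod_cast h, fun h => by exact_mod_cast h⟩
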